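/- arXiv:2402.03295 — 5 statements merged into one kernel-verified Lean document; each statement's English description precedes it below -/
import Mathlib

section
/- Let α > 0, let τ ≥ 1, and for i = 1, …, τ let q_i ∈ ℝ^d and β_i ∈ ℝ. Define A := (√α I + β_1 q_1 q_1ᵀ)(√α I + β_2 q_2 q_2ᵀ) ⋯ (√α I + β_τ q_τ q_τᵀ). Then the matrix A − α^{τ/2} I has rank at most τ, and consequently the matrix A Aᵀ − α^τ I has rank at most 2τ. -/
/-!
The identity `M P - s t • 1 = (M - s • 1) P + s • (P - t • 1)` shows that the rank of the
defect `M - s • 1` is subadditive along products, so a product of `τ` rank-one perturbations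
of `√α • 1` lies within rank `τ` of `√α ^ τ • 1`. Applied to `A` and `Aᵀ`, the same identity
doubles the bound for `A Aᵀ - α ^ τ • 1`.
-/

open Matrix

namespace Matrix

variable {m n K : Type*} [Fintype n] [Field K]

theorem rank_add_le (A B : Matrix m n K) : (A + B).rank ≤ A.rank + B.rank := by
  rw [rank, rank, rank, mulVecLin_add]
  exact (Submodule.finrank_mono (LinearMap.range_add_le _ _)).trans
    (Submodule.finrank_add_le_finrank_add_finrank _ _)

theorem rank_smul_le (c : K) (A : Matrix m n K) : (c • A).rank ≤ A.rank := by
  rcases eq_or_ne c 0 with rfl | hc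
  · simp
  · exact (rank_smul_of_mem_nonZeroDivisors A (mem_nonZeroDivisors_of_ne_zero hc)).le

variable [DecidableEq n]

theorem rank_mul_sub_smul_one_le (s t : K) (M P : Matrix n n K) :
    (M * P - (s * t) • 1).rank ≤ (M - s • 1).rank + (P - t • 1).rank := by
  have hsplit : M * P - (s * t) • 1 = (M - s • 1) * P + s • (P - t • 1) := by
    rw [sub_mul, smul_mul, one_mul, smul_sub, smul_smul]
    abel
  rw [hsplit]
  exact (rank_add_le _ _).trans
    (add_le_add (rank_mul_le_left _ _) (rank_smul_le _ _))

theorem rank_list_prod_sub_pow_smul_one_le (s : K) (l : List (Matrix n n K)) :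
    (l.prod - s ^ l.length • 1).rank ≤ (l.map fun M => (M - s • 1).rank).sum := by
  induction l with
  | nil => simp
  | cons M l ih =>
    rw [List.prod_cons, List.length_cons, pow_succ', List.map_cons, List.sum_cons]
    exact (rank_mul_sub_smul_one_le _ _ _ _).trans (Nat.add_le_add_left ih _)

theorem rank_mul_transpose_sub_mul_self_smul_one_le (c : K) (A : Matrix n n K) :
    (A * Aᵀ - (c * c) • 1).rank ≤ 2 * (A - c • 1).rank := by
  have hT : Aᵀ - c • 1 = (A - c • 1)ᵀ := by
    rw [transpose_sub, transpose_smul, transpose_one]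
  calc (A * Aᵀ - (c * c) • 1).rank ≤ (A - c • 1).rank + (Aᵀ - c • 1).rank :=
        rank_mul_sub_smul_one_le _ _ _ _
    _ = 2 * (A - c • 1).rank := by rw [hT, rank_transpose, two_mul]

end Matrix

theorem qng_low_rank_structure_general (d τ : ℕ) (α : ℝ) (hα : 0 < α)
    (q : Fin τ → (Fin d → ℝ)) (β : Fin τ → ℝ)
    (A : Matrix (Fin d) (Fin d) ℝ)
    (hA : A = ((List.finRange τ).map fun i =>
        Real.sqrt α • (1 : Matrix (Fin d) (Fin d) ℝ) +
          β i • Matrix.vecMulVec (q i) (q i)).prod) :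
    Matrix.rank (A - (Real.sqrt α) ^ τ • (1 : Matrix (Fin d) (Fin d) ℝ)) ≤ τ ∧
      Matrix.rank (A * Aᵀ - α ^ τ • (1 : Matrix (Fin d) (Fin d) ℝ)) ≤ 2 * τ := by
  have hfactor (i : Fin τ) :
      (√α • 1 + β i • vecMulVec (q i) (q i) - √α • 1 : Matrix (Fin d) (Fin d) ℝ).rank ≤ 1 := by
    rw [add_sub_cancel_left]
    exact (rank_smul_le _ _).trans (rank_vecMulVec_le _ _)
  have hA_rank : (A - √α ^ τ • 1).rank ≤ τ := by
    have hprod := rank_list_prod_sub_pow_smul_one_le √α ((List.finRange τ).map fun i =>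
      √α • (1 : Matrix (Fin d) (Fin d) ℝ) + β i • vecMulVec (q i) (q i))
    rw [List.length_map, List.length_finRange, List.map_map] at hprod
    rw [hA]
    refine hprod.trans ((List.sum_le_card_nsmul _ 1 ?_).trans ?_)
    · simpa using hfactor
    · simp
  have hsq : α ^ τ = √α ^ τ * √α ^ τ := by rw [← mul_pow, Real.mul_self_sqrt hα.le]
  refine ⟨hA_rank, ?_⟩
  rw [hsq]
  exact (rank_mul_transpose_sub_mul_self_smul_one_le _ A).trans (by omega)

/-- Observation 1: a product of `τ` rank-one perturbations of `√α I` differs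
from `α^{τ/2} I` by a matrix of rank at most `τ`, hence `A Aᵀ − α^τ I` has rank
at most `2τ`. -/
theorem qng_low_rank_structure (d τ : ℕ) (hτ : 1 ≤ τ) (α : ℝ) (hα : 0 < α)
    (q : Fin τ → (Fin d → ℝ)) (β : Fin τ → ℝ)
    (A : Matrix (Fin d) (Fin d) ℝ)
    (hA : A = ((List.finRange τ).map fun i =>
        Real.sqrt α • (1 : Matrix (Fin d) (Fin d) ℝ) +
          β i • Matrix.vecMulVec (q i) (q i)).prod) :
    Matrix.rank (A - (Real.sqrt α) ^ τ • (1 : Matrix (Fin d) (Fin d) ℝ)) ≤ τ ∧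
      Matrix.rank (A * Aᵀ - α ^ τ • (1 : Matrix (Fin d) (Fin d) ℝ)) ≤ 2 * τ :=
  qng_low_rank_structure_general d τ α hα q β A hA
end

section
/- Let α ∈ (0,1), let A ∈ ℝ^{d×d} be invertible, and let d ∈ ℝ^d be nonzero. Define q := A⁻¹ d, s := ‖q‖² > 0, β := (√(α + (1−α)s) − √α)/s, and K := √α I + β q qᵀ. Then A K Kᵀ Aᵀ = α A Aᵀ + (1−α) d dᵀ. -/
/-!
Writing `K = √α I + β q qᵀ`, the product `K Kᵀ` stays in the span of `I` and `q qᵀ`: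
since `(q qᵀ)² = s q qᵀ` it equals `α I + (2√α β + s β²) q qᵀ`. The choice of `β` is the
positive root of `s β² + 2√α β = 1 - α`, so `K Kᵀ = α I + (1-α) q qᵀ`, and conjugating by `A`
turns `q qᵀ` into `d dᵀ` because `A q = d`.
-/

open Matrix

namespace Matrix

theorem mul_vecMulVec_mul_transpose {l m n p R : Type*} [Fintype m] [Fintype n] [CommSemiring R]
    (A : Matrix l m R) (u : m → R) (v : n → R) (B : Matrix p n R) :
    A * vecMulVec u v * Bᵀ = vecMulVec (A *ᵥ u) (B *ᵥ v) := by
  rw [mul_vecMulVec, vecMulVec_mul, vecMul_transpose]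

theorem smul_one_add_smul_vecMulVec_self_mul_transpose {ι R : Type*} [Fintype ι] [DecidableEq ι]
    [CommRing R] (r b : R) (q : ι → R) :
    (r • 1 + b • vecMulVec q q) * (r • 1 + b • vecMulVec q q)ᵀ =
      (r * r) • 1 + (2 * r * b + b ^ 2 * (q ⬝ᵥ q)) • vecMulVec q q := by
  simp only [transpose_add, transpose_smul, transpose_one, transpose_vecMulVec, add_mul, mul_add,
    smul_mul_smul_comm, Matrix.one_mul, Matrix.mul_one, vecMulVec_mul_vecMulVec, vecMulVec_smul]
  module

end Matrix

theorem two_mul_sqrt_mul_add_sq_mul_eq {a c s β : ℝ} (ha : 0 ≤ a) (has : 0 ≤ a + c * s)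
    (hs : s ≠ 0) (hβ : β = (√(a + c * s) - √a) / s) :
    2 * √a * β + β ^ 2 * s = c := by
  have hβs : √a + β * s = √(a + c * s) := by
    rw [hβ, div_mul_cancel₀ _ hs]
    ring
  have hsq : (√a + β * s) ^ 2 = a + c * s := by rw [hβs, Real.sq_sqrt has]
  apply mul_left_cancel₀ hs
  linear_combination hsq - Real.sq_sqrt ha

theorem qng_factorized_update_general (n : ℕ) (α : ℝ) (hα₀ : 0 < α) (hα₁ : α < 1)
    (A : Matrix (Fin n) (Fin n) ℝ) (hA : IsUnit A)
    (d : Fin n → ℝ)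
    (q : Fin n → ℝ) (hq : q = A⁻¹ *ᵥ d)
    (s : ℝ) (hs : s = q ⬝ᵥ q) (hspos : 0 < s)
    (β : ℝ) (hβ : β = (Real.sqrt (α + (1 - α) * s) - Real.sqrt α) / s)
    (K : Matrix (Fin n) (Fin n) ℝ)
    (hK : K = Real.sqrt α • (1 : Matrix (Fin n) (Fin n) ℝ) + β • Matrix.vecMulVec q q) :
    A * K * Kᵀ * Aᵀ = α • (A * Aᵀ) + (1 - α) • Matrix.vecMulVec d d := by
  have hAq : A *ᵥ q = d := by
    rw [hq, mulVec_mulVec, mul_nonsing_inv A ((isUnit_iff_isUnit_det A).mp hA), one_mulVec]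
  have hcoeff : 2 * √α * β + β ^ 2 * s = 1 - α :=
    two_mul_sqrt_mul_add_sq_mul_eq hα₀.le (by nlinarith) hspos.ne' hβ
  have hKK : K * Kᵀ = α • 1 + (1 - α) • vecMulVec q q := by
    rw [hK, smul_one_add_smul_vecMulVec_self_mul_transpose, ← hs, hcoeff,
      Real.mul_self_sqrt hα₀.le]
  calc A * K * Kᵀ * Aᵀ = A * (K * Kᵀ) * Aᵀ := by rw [Matrix.mul_assoc A]
    _ = α • (A * Aᵀ) + (1 - α) • vecMulVec d d := by
      rw [hKK, Matrix.mul_add, Matrix.add_mul, Matrix.mul_smul, Matrix.mul_smul, Matrix.smul_mul,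
        Matrix.smul_mul, Matrix.mul_one, mul_vecMulVec_mul_transpose, hAq]

/-- One-step factorized QNG update: with `q := A⁻¹ d`, `s := ‖q‖²`,
`β := (√(α + (1−α)s) − √α)/s` and `K := √α I + β q qᵀ`, we have
`A K Kᵀ Aᵀ = α A Aᵀ + (1−α) d dᵀ`. -/
theorem qng_factorized_update (n : ℕ) (α : ℝ) (hα₀ : 0 < α) (hα₁ : α < 1)
    (A : Matrix (Fin n) (Fin n) ℝ) (hA : IsUnit A)
    (d : Fin n → ℝ) (hd : d ≠ 0)
    (q : Fin n → ℝ) (hq : q = A⁻¹ *ᵥ d)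
    (s : ℝ) (hs : s = q ⬝ᵥ q) (hspos : 0 < s)
    (β : ℝ) (hβ : β = (Real.sqrt (α + (1 - α) * s) - Real.sqrt α) / s)
    (K : Matrix (Fin n) (Fin n) ℝ)
    (hK : K = Real.sqrt α • (1 : Matrix (Fin n) (Fin n) ℝ) + β • Matrix.vecMulVec q q) :
    A * K * Kᵀ * Aᵀ = α • (A * Aᵀ) + (1 - α) • Matrix.vecMulVec d d :=
  qng_factorized_update_general n α hα₀ hα₁ A hA d q hq s hs hspos β hβ K hK
end

section
/- Let U ∈ ℝ^{d×τ} be semi-orthogonal, h ∈ ℝ^d with r := ‖h − U Uᵀ h‖ > 0, p := (h − U Uᵀ h)/r, K ∈ ℝ^{τ×τ} an arbitrary diagonal matrix, and β ∈ ℝ. Let W := (U | p) ∈ ℝ^{d×(τ+1)}, let B be the (τ+1)×(τ+1) matrix with top-left block I_τ, top-right column Uᵀh, bottom-left row 0 and bottom-right entry r, and let D be the (τ+1)×(τ+1) diagonal matrix diag(K, β). Then U K Uᵀ + β h hᵀ = W (B D Bᵀ) Wᵀ. -/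
open Matrix

/-- Reduction of the rank-one update of the symmetric factorization to a small
`(τ+1)×(τ+1)` problem: `U K Uᵀ + β h hᵀ = W (B D Bᵀ) Wᵀ`. -/
theorem ginger_rank_one_svd_reduction (d τ : ℕ)
    (U : Matrix (Fin d) (Fin τ) ℝ) (hU : Uᵀ * U = 1)
    (h : Fin d → ℝ)
    (r : ℝ) (hr : r = Real.sqrt ((h - U *ᵥ (Uᵀ *ᵥ h)) ⬝ᵥ (h - U *ᵥ (Uᵀ *ᵥ h))))
    (hrpos : 0 < r)
    (p : Fin d → ℝ) (hp : p = r⁻¹ • (h - U *ᵥ (Uᵀ *ᵥ h)))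
    (K : Matrix (Fin τ) (Fin τ) ℝ) (hK : K.IsDiag) (β : ℝ)
    (W : Matrix (Fin d) (Fin τ ⊕ Unit) ℝ)
    (hW : W = Matrix.fromCols U (Matrix.of fun i (_ : Unit) => p i))
    (B : Matrix (Fin τ ⊕ Unit) (Fin τ ⊕ Unit) ℝ)
    (hB : B = Matrix.fromBlocks 1 (Matrix.of fun k (_ : Unit) => (Uᵀ *ᵥ h) k)
        0 (Matrix.of fun (_ : Unit) (_ : Unit) => r))
    (D : Matrix (Fin τ ⊕ Unit) (Fin τ ⊕ Unit) ℝ)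
    (hD : D = Matrix.fromBlocks K 0 0 (Matrix.of fun (_ : Unit) (_ : Unit) => β)) :
    U * K * Uᵀ + β • Matrix.vecMulVec h h = W * (B * D * Bᵀ) * Wᵀ := by
  have hrne : r ≠ 0 := ne_of_gt hrpos
  have hWB : W * B = Matrix.fromCols U (Matrix.of fun i (_ : Unit) => h i) := by
    rw [hW, hB, Matrix.fromCols_mul_fromBlocks]
    rw [show U * (1 : Matrix (Fin τ) (Fin τ) ℝ) + (Matrix.of fun i (_ : Unit) => p i) * (0 : Matrix Unit (Fin τ) ℝ) = U by simp]
    ext i u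
    cases u with
    | inl k => simp [Matrix.fromCols_apply_inl]
    | inr _ =>
      simp only [Matrix.fromCols_apply_inr, Matrix.add_apply, Matrix.mul_apply,
        Matrix.of_apply, hp, Pi.smul_apply, Pi.sub_apply, smul_eq_mul, Finset.univ_unique,
        Finset.sum_singleton]
      rw [inv_mul_eq_div, div_mul_eq_mul_div, mul_div_assoc, div_self hrne, mul_one]
      have : ∑ j, U i j * (Uᵀ *ᵥ h) j = (U *ᵥ (Uᵀ *ᵥ h)) i := by
        simp [Matrix.mulVec, dotProduct]
      rw [this]; ring
  have key : W * (B * D * Bᵀ) * Wᵀ = (W * B) * D * (W * B)ᵀ := by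
    rw [Matrix.transpose_mul]
    simp only [Matrix.mul_assoc]
  rw [key, hWB, hD, Matrix.fromCols_mul_fromBlocks, Matrix.transpose_fromCols,
    Matrix.fromCols_mul_fromRows]
  congr 1
  · simp
  · ext i j
    simp [Matrix.mul_apply, Matrix.vecMulVec, mul_comm, mul_assoc, mul_left_comm]
end

section
/- Let d > τ ≥ 1 be natural numbers, γ > 0 a real number, U ∈ ℝ^{d×τ} a semi-orthogonal matrix, and σ ∈ ℝ^τ a vector with nonnegative entries. Then G := γ I + U diag(σ) Uᵀ is symmetric positive definite, and the eigenvalues of G⁻¹ satisfy 0 < λ_min(G⁻¹) ≤ λ_max(G⁻¹) = γ⁻¹; in particular the largest eigenvalue of G⁻¹ equals exactly γ⁻¹. -/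
/-!
`G` is `γ I` plus a positive semidefinite matrix, so it is positive definite and `G ⪰ γ I`;
evaluating the quadratic form of `G` at an eigenvector of `G⁻¹` bounds every eigenvalue of `G⁻¹`
by `γ⁻¹`. Since `τ < d`, some `v ≠ 0` has `Uᵀ v = 0`, and then `G v = γ v`, so `γ⁻¹` is attained.
-/

open Matrix

namespace Matrix

variable {m n K : Type*} [Fintype m] [Fintype n] [Field K]

theorem exists_ne_zero_mulVec_eq_zero_of_card_lt (A : Matrix m n K)
    (h : Fintype.card m < Fintype.card n) : ∃ v ≠ 0, A *ᵥ v = 0 := by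
  obtain ⟨v, hv, hv0⟩ := (Submodule.ne_bot_iff _).mp
    (LinearMap.ker_ne_bot_of_finrank_lt (f := A.mulVecLin) (by simpa using h))
  exact ⟨v, hv0, hv⟩

variable [DecidableEq n]

theorem posSemidef_mul_diagonal_mul_transpose {σ : n → ℝ} (hσ : 0 ≤ σ) (U : Matrix m n ℝ) :
    (U * diagonal σ * Uᵀ).PosSemidef := by
  simpa using (PosSemidef.diagonal hσ).mul_mul_conjTranspose_same U

theorem mem_spectrum_of_mulVec_eq_smul {M : Matrix n n K} {μ : K} {v : n → K} (hv : v ≠ 0)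
    (h : M *ᵥ v = μ • v) : μ ∈ spectrum K M := by
  rw [← spectrum_toLin', ← Module.End.hasEigenvalue_iff_mem_spectrum]
  exact Module.End.hasEigenvalue_of_hasEigenvector
    ⟨Module.End.mem_eigenspace_iff.mpr (by rwa [toLin'_apply]), hv⟩

theorem inv_mulVec_eq_inv_smul_of_mulVec_eq_smul {M : Matrix n n K} (hM : IsUnit M.det)
    {μ : K} (hμ : μ ≠ 0) {v : n → K} (h : M *ᵥ v = μ • v) : M⁻¹ *ᵥ v = μ⁻¹ • v :=
  calc M⁻¹ *ᵥ v = μ⁻¹ • M⁻¹ *ᵥ (M *ᵥ v) := by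
        rw [h, mulVec_smul, smul_smul, inv_mul_cancel₀ hμ, one_smul]
    _ = μ⁻¹ • v := by rw [mulVec_mulVec, nonsing_inv_mul _ hM, one_mulVec]

theorem le_of_posSemidef_sub_of_mulVec_eq_smul {A : Matrix n n ℝ} {γ μ : ℝ}
    (hA : (A - γ • 1).PosSemidef) {v : n → ℝ} (hv : v ≠ 0) (h : A *ᵥ v = μ • v) : γ ≤ μ := by
  have hquad : v ⬝ᵥ ((A - γ • 1) *ᵥ v) = (μ - γ) * (v ⬝ᵥ v) := by
    rw [sub_mulVec, h, smul_mulVec, one_mulVec, ← sub_smul, dotProduct_smul, smul_eq_mul]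
  have hnonneg : 0 ≤ v ⬝ᵥ ((A - γ • 1) *ᵥ v) := by simpa using hA.dotProduct_mulVec_nonneg v
  have hvv : 0 < v ⬝ᵥ v := by simpa using dotProduct_star_self_pos_iff.mpr hv
  rw [hquad] at hnonneg
  exact sub_nonneg.mp (nonneg_of_mul_nonneg_left hnonneg hvv)

theorem eigenvalues_inv_le_inv_of_posSemidef_sub {M : Matrix n n ℝ} (hM : M.PosDef) {γ : ℝ}
    (hγ : 0 < γ) (hMγ : (M - γ • 1).PosSemidef) (hH : M⁻¹.IsHermitian) (i : n) :
    hH.eigenvalues i ≤ γ⁻¹ := by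
  have hdet : IsUnit M.det := (isUnit_iff_isUnit_det M).mp hM.isUnit
  have hpos : 0 < hH.eigenvalues i := hM.inv.eigenvalues_pos i
  set v : n → ℝ := ⇑(hH.eigenvectorBasis i)
  have hMv : M *ᵥ v = (hH.eigenvalues i)⁻¹ • v := by
    simpa only [nonsing_inv_nonsing_inv M hdet] using inv_mulVec_eq_inv_smul_of_mulVec_eq_smul
      (isUnit_nonsing_inv_det M hdet) hpos.ne' (hH.mulVec_eigenvectorBasis i)
  have hv : v ≠ 0 := by simpa [v] using hH.eigenvectorBasis.orthonormal.ne_zero i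
  exact (le_inv_comm₀ hγ hpos).mp (le_of_posSemidef_sub_of_mulVec_eq_smul hMγ hv hMv)

end Matrix

theorem ginger_lemma1_general (d τ : ℕ) (hdτ : τ < d) (γ : ℝ) (hγ : 0 < γ)
    (U : Matrix (Fin d) (Fin τ) ℝ)
    (σ : Fin τ → ℝ) (hσ : ∀ i, 0 ≤ σ i)
    (G : Matrix (Fin d) (Fin d) ℝ)
    (hG : G = γ • (1 : Matrix (Fin d) (Fin d) ℝ) + U * Matrix.diagonal σ * Uᵀ) :
    G.PosDef ∧
      ∀ hH : (G⁻¹).IsHermitian,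
        (0 < ⨅ i, hH.eigenvalues i) ∧
        ((⨅ i, hH.eigenvalues i) ≤ ⨆ i, hH.eigenvalues i) ∧
        ((⨆ i, hH.eigenvalues i) = γ⁻¹) := by
  have hB := posSemidef_mul_diagonal_mul_transpose hσ U
  have hGpd : G.PosDef := hG ▸ (PosDef.one.smul hγ).add_posSemidef hB
  have hdet : IsUnit G.det := (isUnit_iff_isUnit_det G).mp hGpd.isUnit
  refine ⟨hGpd, fun hH => ?_⟩
  have hle : ∀ i, hH.eigenvalues i ≤ γ⁻¹ :=
    eigenvalues_inv_le_inv_of_posSemidef_sub hGpd hγ (by rwa [hG, add_sub_cancel_left]) hH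
  obtain ⟨v, hv0, hUv⟩ := exists_ne_zero_mulVec_eq_zero_of_card_lt Uᵀ (by simpa using hdτ)
  have hGv : G *ᵥ v = γ • v := by
    rw [hG, add_mulVec, smul_mulVec, one_mulVec, ← mulVec_mulVec, hUv, mulVec_zero, add_zero]
  obtain ⟨i₀, hi₀⟩ := hH.spectrum_real_eq_range_eigenvalues ▸
    mem_spectrum_of_mulVec_eq_smul hv0 (inv_mulVec_eq_inv_smul_of_mulVec_eq_smul hdet hγ.ne' hGv)
  have : Nonempty (Fin d) := ⟨⟨0, by omega⟩⟩
  have hsup : ⨆ i, hH.eigenvalues i = γ⁻¹ :=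
    ciSup_eq_of_forall_le_of_forall_lt_exists_gt hle fun _ hw => ⟨i₀, hi₀ ▸ hw⟩
  refine ⟨?_, ciInf_le_ciSup (Set.finite_range _).bddBelow (Set.finite_range _).bddAbove, hsup⟩
  obtain ⟨j, hj⟩ := exists_eq_ciInf_of_finite (f := hH.eigenvalues)
  exact hj ▸ hGpd.inv.eigenvalues_pos j

/-- Lemma 1: for `d > τ ≥ 1`, `γ > 0`, semi-orthogonal `U` and `σ ≥ 0`, the
matrix `G = γ I + U diag(σ) Uᵀ` is symmetric positive definite, and the
eigenvalues of `G⁻¹` satisfy `0 < λ_min(G⁻¹) ≤ λ_max(G⁻¹) = γ⁻¹`. -/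
theorem ginger_lemma1 (d τ : ℕ) (hτ : 1 ≤ τ) (hdτ : τ < d) (γ : ℝ) (hγ : 0 < γ)
    (U : Matrix (Fin d) (Fin τ) ℝ) (hU : Uᵀ * U = 1)
    (σ : Fin τ → ℝ) (hσ : ∀ i, 0 ≤ σ i)
    (G : Matrix (Fin d) (Fin d) ℝ)
    (hG : G = γ • (1 : Matrix (Fin d) (Fin d) ℝ) + U * Matrix.diagonal σ * Uᵀ) :
    G.PosDef ∧
      ∀ hH : (G⁻¹).IsHermitian,
        (0 < ⨅ i, hH.eigenvalues i) ∧
        ((⨅ i, hH.eigenvalues i) ≤ ⨆ i, hH.eigenvalues i) ∧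
        ((⨆ i, hH.eigenvalues i) = γ⁻¹) :=
  ginger_lemma1_general d τ hdτ γ hγ U σ hσ G hG
end

section
/- Let L : ℝ^d → ℝ be differentiable with ℓ-Lipschitz gradient (ℓ > 0), let γ > 0 and M_g > 0, let (η_t)_{t≥0} be positive step sizes, and let (G_t)_{t≥0} be symmetric positive definite matrices with λ_max(G_t⁻¹) ≤ γ⁻¹ for all t. Define θ_{t+1} := θ_t − η_t G_t⁻¹ ∇L(θ_t), and assume ‖∇L(θ_t)‖ ≤ M_g for all t. Then for every T ≥ 1: Σ_{t=0}^{T−1} η_t λ_min(G_t⁻¹) ‖∇L(θ_t)‖² ≤ L(θ₀) − L(θ_T) + (ℓ/2)(M_g/γ)² Σ_{t=0}^{T−1} η_t². -/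
/-!
Each iteration is an instance of the descent lemma `L (x + v) ≤ L x + ⟪∇L x, v⟫ + ℓ/2 ‖v‖²`
with `v = -η G⁻¹ ∇L x`. Expanding `∇L x` in an orthonormal eigenbasis of `G⁻¹` bounds the linear
term by `-η λ_min(G⁻¹) ‖∇L x‖²` and the quadratic one by `ℓ/2 η² (λ_max(G⁻¹) ‖∇L x‖)²`, which is at
most `ℓ/2 η² (M_g/γ)²`. Summing over the iterations telescopes the values of `L`.
-/

open Matrix RealInnerProductSpace

namespace Matrix.IsHermitian

variable {n : Type*} [Fintype n] [DecidableEq n] {A : Matrix n n ℝ} (hA : A.IsHermitian)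

lemma toEuclideanLin_eigenvectorBasis (i : n) :
    toEuclideanLin A (hA.eigenvectorBasis i) = hA.eigenvalues i • hA.eigenvectorBasis i := by
  rw [toLpLin_apply]
  apply (WithLp.equiv 2 (n → ℝ)).injective
  simpa using hA.mulVec_eigenvectorBasis i

lemma inner_eigenvectorBasis_toEuclideanLin (i : n) (x : EuclideanSpace ℝ n) :
    ⟪hA.eigenvectorBasis i, toEuclideanLin A x⟫ =
      hA.eigenvalues i * ⟪hA.eigenvectorBasis i, x⟫ := by
  rw [← isSymmetric_toEuclideanLin_iff.2 hA, hA.toEuclideanLin_eigenvectorBasis,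
    real_inner_smul_left]

lemma inner_toEuclideanLin_self (x : EuclideanSpace ℝ n) :
    ⟪x, toEuclideanLin A x⟫ = ∑ i, hA.eigenvalues i * ⟪hA.eigenvectorBasis i, x⟫ ^ 2 := by
  rw [← hA.eigenvectorBasis.sum_inner_mul_inner]
  refine Finset.sum_congr rfl fun i _ => ?_
  rw [hA.inner_eigenvectorBasis_toEuclideanLin, real_inner_comm]
  ring

lemma norm_toEuclideanLin_sq (x : EuclideanSpace ℝ n) :
    ‖toEuclideanLin A x‖ ^ 2 = ∑ i, hA.eigenvalues i ^ 2 * ⟪hA.eigenvectorBasis i, x⟫ ^ 2 := by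
  simp_rw [← hA.eigenvectorBasis.sum_sq_inner_right, hA.inner_eigenvectorBasis_toEuclideanLin,
    mul_pow]

lemma iInf_eigenvalues_mul_norm_sq_le_inner (x : EuclideanSpace ℝ n) :
    (⨅ i, hA.eigenvalues i) * ‖x‖ ^ 2 ≤ ⟪x, toEuclideanLin A x⟫ := by
  rw [hA.inner_toEuclideanLin_self, ← hA.eigenvectorBasis.sum_sq_inner_right, Finset.mul_sum]
  gcongr with i
  exact ciInf_le (Set.finite_range _).bddBelow i

lemma norm_toEuclideanLin_le {c : ℝ} (hc : 0 ≤ c) (h : ∀ i, |hA.eigenvalues i| ≤ c)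
    (x : EuclideanSpace ℝ n) : ‖toEuclideanLin A x‖ ≤ c * ‖x‖ := by
  refine le_of_sq_le_sq ?_ (by positivity)
  rw [hA.norm_toEuclideanLin_sq, mul_pow, ← hA.eigenvectorBasis.sum_sq_inner_right,
    Finset.mul_sum]
  gcongr ∑ i, ?_ * _ with i
  exact sq_le_sq' (abs_le.1 (h i)).1 (abs_le.1 (h i)).2

end Matrix.IsHermitian

lemma Matrix.PosSemidef.norm_toEuclideanLin_le {n : Type*} [Fintype n] [DecidableEq n]
    {A : Matrix n n ℝ} (hA : A.PosSemidef) (x : EuclideanSpace ℝ n) :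
    ‖toEuclideanLin A x‖ ≤ (⨆ i, hA.1.eigenvalues i) * ‖x‖ :=
  hA.1.norm_toEuclideanLin_le (Real.iSup_nonneg hA.eigenvalues_nonneg) (fun i => by
    rw [abs_of_nonneg (hA.eigenvalues_nonneg i)]
    exact le_ciSup (Set.finite_range _).bddAbove i) x

theorem Differentiable.le_add_inner_gradient_add_of_lipschitz_gradient
    {F : Type*} [NormedAddCommGroup F] [InnerProductSpace ℝ F] [CompleteSpace F]
    {L : F → ℝ} (hL : Differentiable ℝ L) {ℓ : ℝ}
    (hLip : ∀ a b, ‖gradient L a - gradient L b‖ ≤ ℓ * ‖a - b‖) (x v : F) :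
    L (x + v) ≤ L x + ⟪gradient L x, v⟫ + ℓ / 2 * ‖v‖ ^ 2 := by
  have hf : ∀ s : ℝ, HasDerivAt (fun s => L (x + s • v)) ⟪gradient L (x + s • v), v⟫ s := by
    intro s
    have hline : HasDerivAt (fun s : ℝ => x + s • v) v s := by
      simpa using ((hasDerivAt_id s).smul_const v).const_add x
    have := (hL (x + s • v)).hasFDerivAt.comp_hasDerivAt s hline
    rwa [(hL _).hasGradientAt.fderiv_apply] at this
  have hB : ∀ s : ℝ, HasDerivAt (fun s => L x + s * ⟪gradient L x, v⟫ + ℓ / 2 * s ^ 2 * ‖v‖ ^ 2)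
      (⟪gradient L x, v⟫ + ℓ * s * ‖v‖ ^ 2) s := by
    intro s
    refine ((((hasDerivAt_id' s).mul_const _).const_add _).add
      (((hasDerivAt_pow 2 s).const_mul _).mul_const _)).congr_deriv ?_
    ring
  have hslope : ∀ s ∈ Set.Ico (0 : ℝ) 1,
      ⟪gradient L (x + s • v), v⟫ ≤ ⟪gradient L x, v⟫ + ℓ * s * ‖v‖ ^ 2 := by
    rintro s ⟨hs, -⟩
    have hgrad_sub := hLip (x + s • v) x
    rw [add_sub_cancel_left, norm_smul, Real.norm_of_nonneg hs] at hgrad_sub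
    calc ⟪gradient L (x + s • v), v⟫
        = ⟪gradient L x, v⟫ + ⟪gradient L (x + s • v) - gradient L x, v⟫ := by
          rw [inner_sub_left]; ring
      _ ≤ ⟪gradient L x, v⟫ + ‖gradient L (x + s • v) - gradient L x‖ * ‖v‖ := by
          gcongr; exact real_inner_le_norm _ _
      _ ≤ ⟪gradient L x, v⟫ + ℓ * (s * ‖v‖) * ‖v‖ := by gcongr
      _ = ⟪gradient L x, v⟫ + ℓ * s * ‖v‖ ^ 2 := by ring
  simpa using image_le_of_deriv_right_le_deriv_boundary
    (fun s _ => (hf s).continuousAt.continuousWithinAt) (fun s _ => (hf s).hasDerivWithinAt)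
    (by simp) (fun s _ => (hB s).continuousAt.continuousWithinAt)
    (fun s _ => (hB s).hasDerivWithinAt) hslope (Set.right_mem_Icc.2 zero_le_one)

theorem Finset.sum_range_le_sub_add_sum_of_le {α : Type*} [AddCommGroup α] [PartialOrder α]
    [IsOrderedAddMonoid α] {a b f : ℕ → α} (h : ∀ t, a t ≤ f t - f (t + 1) + b t) (T : ℕ) :
    ∑ t ∈ range T, a t ≤ f 0 - f T + ∑ t ∈ range T, b t :=
  (sum_le_sum fun t _ => h t).trans_eq (by rw [sum_add_distrib, sum_range_sub'])

theorem preconditioned_gradient_step_descent {n : Type*} [Fintype n] [DecidableEq n]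
    {L : EuclideanSpace ℝ n → ℝ} (hL : Differentiable ℝ L) {ℓ : ℝ} (hℓ : 0 ≤ ℓ)
    (hLip : ∀ a b, ‖gradient L a - gradient L b‖ ≤ ℓ * ‖a - b‖)
    {P : Matrix n n ℝ} (hP : P.PosSemidef) {η : ℝ} (hη : 0 ≤ η) (x : EuclideanSpace ℝ n) :
    η * (⨅ i, hP.1.eigenvalues i) * ‖gradient L x‖ ^ 2 ≤
      L x - L (x - η • toEuclideanLin P (gradient L x)) +
        ℓ / 2 * ((⨆ i, hP.1.eigenvalues i) * ‖gradient L x‖) ^ 2 * η ^ 2 := by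
  set g := gradient L x
  set w := toEuclideanLin P g
  have hdescent := hL.le_add_inner_gradient_add_of_lipschitz_gradient hLip x (-(η • w))
  rw [← sub_eq_add_neg, inner_neg_right, real_inner_smul_right, norm_neg, norm_smul,
    Real.norm_of_nonneg hη] at hdescent
  have hinner : η * ((⨅ i, hP.1.eigenvalues i) * ‖g‖ ^ 2) ≤ η * ⟪g, w⟫ :=
    mul_le_mul_of_nonneg_left (hP.1.iInf_eigenvalues_mul_norm_sq_le_inner g) hη
  have hnorm :
      ℓ / 2 * (η * ‖w‖) ^ 2 ≤ ℓ / 2 * ((⨆ i, hP.1.eigenvalues i) * ‖g‖) ^ 2 * η ^ 2 := by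
    rw [mul_pow, mul_comm (η ^ 2), mul_assoc]
    gcongr
    exact hP.norm_toEuclideanLin_le g
  linarith

theorem ginger_telescoped_descent_general (d : ℕ)
    (L : EuclideanSpace ℝ (Fin d) → ℝ) (hL : Differentiable ℝ L)
    (ℓ : ℝ) (hℓ : 0 < ℓ)
    (hLip : ∀ θ₁ θ₂ : EuclideanSpace ℝ (Fin d),
      ‖gradient L θ₁ - gradient L θ₂‖ ≤ ℓ * ‖θ₁ - θ₂‖)
    (γ Mg : ℝ)
    (η : ℕ → ℝ) (hη : ∀ t, 0 < η t)
    (G : ℕ → Matrix (Fin d) (Fin d) ℝ) (hG : ∀ t, (G t).PosDef)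
    (hmax : ∀ t, (⨆ i, (hG t).inv.1.eigenvalues i) ≤ γ⁻¹)
    (θ : ℕ → EuclideanSpace ℝ (Fin d))
    (hstep : ∀ t, θ (t + 1) = θ t - η t • Matrix.toEuclideanLin (G t)⁻¹ (gradient L (θ t)))
    (hgrad : ∀ t, ‖gradient L (θ t)‖ ≤ Mg) :
    ∀ T : ℕ, 1 ≤ T →
      ∑ t ∈ Finset.range T, η t * (⨅ i, (hG t).inv.1.eigenvalues i) * ‖gradient L (θ t)‖ ^ 2 ≤
        L (θ 0) - L (θ T) + ℓ / 2 * (Mg / γ) ^ 2 * ∑ t ∈ Finset.range T, η t ^ 2 := by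
  intro T _
  rw [Finset.mul_sum]
  refine Finset.sum_range_le_sub_add_sum_of_le (f := fun t => L (θ t)) (fun t => ?_) T
  have hP := (hG t).inv.posSemidef
  have hsup_nonneg : 0 ≤ ⨆ i, hP.1.eigenvalues i := Real.iSup_nonneg hP.eigenvalues_nonneg
  have hbound : (⨆ i, hP.1.eigenvalues i) * ‖gradient L (θ t)‖ ≤ Mg / γ := by
    rw [div_eq_inv_mul]
    exact mul_le_mul (hmax t) (hgrad t) (norm_nonneg _) (hsup_nonneg.trans (hmax t))
  have hdescent := preconditioned_gradient_step_descent hL hℓ.le hLip hP (hη t).le (θ t)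
  rw [← hstep t] at hdescent
  refine hdescent.trans ?_
  gcongr

/-- Telescoped descent inequality (Equations 29–30 in the proof of Theorem 1):
summing the per-step descent inequality over `T` preconditioned gradient steps. -/
theorem ginger_telescoped_descent (d : ℕ)
    (L : EuclideanSpace ℝ (Fin d) → ℝ) (hL : Differentiable ℝ L)
    (ℓ : ℝ) (hℓ : 0 < ℓ)
    (hLip : ∀ θ₁ θ₂ : EuclideanSpace ℝ (Fin d),
      ‖gradient L θ₁ - gradient L θ₂‖ ≤ ℓ * ‖θ₁ - θ₂‖)
    (γ Mg : ℝ) (hγ : 0 < γ) (hMg : 0 < Mg)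
    (η : ℕ → ℝ) (hη : ∀ t, 0 < η t)
    (G : ℕ → Matrix (Fin d) (Fin d) ℝ) (hG : ∀ t, (G t).PosDef)
    (hmax : ∀ t, (⨆ i, (hG t).inv.1.eigenvalues i) ≤ γ⁻¹)
    (θ : ℕ → EuclideanSpace ℝ (Fin d))
    (hstep : ∀ t, θ (t + 1) = θ t - η t • Matrix.toEuclideanLin (G t)⁻¹ (gradient L (θ t)))
    (hgrad : ∀ t, ‖gradient L (θ t)‖ ≤ Mg) :
    ∀ T : ℕ, 1 ≤ T →
      ∑ t ∈ Finset.range T, η t * (⨅ i, (hG t).inv.1.eigenvalues i) * ‖gradient L (θ t)‖ ^ 2 ≤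
        L (θ 0) - L (θ T) + ℓ / 2 * (Mg / γ) ^ 2 * ∑ t ∈ Finset.range T, η t ^ 2 :=
  ginger_telescoped_descent_general d L hL ℓ hℓ hLip γ Mg η hη G hG hmax θ hstep hgrad
end
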